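/- Let n be an integer with 9 ≤ n ≤ 11 and let b satisfy 0 < b ≤ 1/(2n+2). Then (1 + (A(b)/2)·√(n(n-2)))² · (1/(P(b) + n·Q(b))) ≤ ω(b)/4. -/
import Mathlib
set_option maxHeartbeats 4000000


/-- The quantity `a(b) = b(2+(n-2)b)² / (2(2+(n-3)b))`. -/
noncomputable def aFun (n : ℕ) (b : ℝ) : ℝ :=
  b * (2 + ((n : ℝ) - 2) * b) ^ 2 / (2 * (2 + ((n : ℝ) - 3) * b))

/-- The quantity `γ(b) = b / (2+(n-3)b)`. -/
noncomputable def gammaFun (n : ℕ) (b : ℝ) : ℝ :=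
  b / (2 + ((n : ℝ) - 3) * b)

/-- The quantity
`ρ(b) = b - 2(n-1)γ(b)(1-2b)/n² - 2(n-1)(1+γ(b))(n²b²-2(n-1)(a(b)-b)(1-2b))/(n²(1+2(n-1)a(b)))`. -/
noncomputable def rhoFun (n : ℕ) (b : ℝ) : ℝ :=
  b - 2 * ((n : ℝ) - 1) * gammaFun n b * (1 - 2 * b) / (n : ℝ) ^ 2 -
    2 * ((n : ℝ) - 1) * (1 + gammaFun n b) *
      ((n : ℝ) ^ 2 * b ^ 2 - 2 * ((n : ℝ) - 1) * (aFun n b - b) * (1 - 2 * b)) /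
      ((n : ℝ) ^ 2 * (1 + 2 * ((n : ℝ) - 1) * aFun n b))


/-- The quantity `ω(b) = √(27(2+(n-2)b)·b(1+(n-2)b)² / (8n²ρ(b)³(2+(n-3)b)²))`. -/
noncomputable def omegaFun (n : ℕ) (b : ℝ) : ℝ :=
  Real.sqrt (27 * (2 + ((n : ℝ) - 2) * b) * (b * (1 + ((n : ℝ) - 2) * b) ^ 2) /
    (8 * (n : ℝ) ^ 2 * rhoFun n b ^ 3 * (2 + ((n : ℝ) - 3) * b) ^ 2))

/-- The quantity `A(b) = (2+8b)/((n-1)(n-4)) + (4/n)(2b+(n-2)a(b))`. -/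
noncomputable def AFun (n : ℕ) (b : ℝ) : ℝ :=
  (2 + 8 * b) / (((n : ℝ) - 1) * ((n : ℝ) - 4)) +
    4 / (n : ℝ) * (2 * b + ((n : ℝ) - 2) * aFun n b)

/-- The quantity `P(b) = 2(1+(n-2)b)²/(1+2(n-1)a(b))`. -/
noncomputable def Pcoef (n : ℕ) (b : ℝ) : ℝ :=
  2 * (1 + ((n : ℝ) - 2) * b) ^ 2 / (1 + 2 * ((n : ℝ) - 1) * aFun n b)

/-- The quantity `Q(b) = 2((1+2(n-1)a(b))² - (1+(n-2)b)²)/(n(1+2(n-1)a(b)))`. -/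
noncomputable def Qcoef (n : ℕ) (b : ℝ) : ℝ :=
  2 * ((1 + 2 * ((n : ℝ) - 1) * aFun n b) ^ 2 - (1 + ((n : ℝ) - 2) * b) ^ 2) /
    ((n : ℝ) * (1 + 2 * ((n : ℝ) - 1) * aFun n b))

/-- for `9 ≤ n ≤ 11` and `0 < b ≤ 1/(2n+2)`,
`(1 + (A(b)/2)√(n(n-2)))² · (1/(P(b)+nQ(b))) ≤ ω(b)/4`. -/
theorem stmt_6 (n : ℕ) (hn9 : 9 ≤ n) (hn11 : n ≤ 11) (b : ℝ)
    (hb0 : 0 < b) (hb : b ≤ 1 / (2 * (n : ℝ) + 2)) :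
    (1 + AFun n b / 2 * Real.sqrt ((n : ℝ) * ((n : ℝ) - 2))) ^ 2 *
        (1 / (Pcoef n b + (n : ℝ) * Qcoef n b)) ≤
      omegaFun n b / 4 := by
  interval_cases n
  · -- n = 9
    have hbm : b ≤ (1/20) := by
      rw [show (2*((9:ℕ):ℝ)+2) = 20 by norm_num] at hb
      linarith [hb]
    have hE : (0:ℝ) < 2 + 6*b := by linarith
    have ha : aFun 9 b = b*(2+7*b)^2/(2*(2+6*b)) := by
      simp only [aFun]; norm_num
    have ha0 : 0 ≤ aFun 9 b := by
      rw [ha]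
      apply div_nonneg (by positivity) (by nlinarith)
    have hA : AFun 9 b = (2+8*b)/40 + (4/9)*(2*b+7*aFun 9 b) := by
      simp only [AFun]; norm_num
    have hA0 : 0 ≤ AFun 9 b := by
      rw [hA]; nlinarith [ha0]
    have hD : (0:ℝ) < 1 + 16 * aFun 9 b := by nlinarith [ha0]
    have hPQ : Pcoef 9 b + ((9:ℕ):ℝ)*Qcoef 9 b = 2*(1 + 16 * aFun 9 b) := by
      simp only [Pcoef, Qcoef]
      rw [show (((9:ℕ):ℝ)-1) = 8 by norm_num, show (((9:ℕ):ℝ)-2) = 7 by norm_num,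
          show (((9:ℕ):ℝ)) = 9 by norm_num]
      field_simp
      ring
    have hs : Real.sqrt (((9:ℕ):ℝ) * (((9:ℕ):ℝ)-2)) ≤ (397/50) := by
      rw [show ((9:ℕ):ℝ) * (((9:ℕ):ℝ)-2) = 63 by norm_num]
      rw [Real.sqrt_le_iff]
      norm_num
    have hsnn : 0 ≤ Real.sqrt (((9:ℕ):ℝ) * (((9:ℕ):ℝ)-2)) := Real.sqrt_nonneg _
    have key1 : (1 + AFun 9 b/2*Real.sqrt (((9:ℕ):ℝ) * (((9:ℕ):ℝ)-2)))^2
        ≤ 2*(61/50)*(1 + 16 * aFun 9 b) := by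
      have h1 : 1 + AFun 9 b/2*Real.sqrt (((9:ℕ):ℝ) * (((9:ℕ):ℝ)-2))
          ≤ 1 + AFun 9 b/2*(397/50) := by nlinarith [hA0, hs, hsnn]
      have h0 : 0 ≤ 1 + AFun 9 b/2*Real.sqrt (((9:ℕ):ℝ) * (((9:ℕ):ℝ)-2)) := by
        nlinarith [mul_nonneg (by linarith : (0:ℝ) ≤ AFun 9 b/2) hsnn]
      have h2 : (1 + AFun 9 b/2*(397/50))^2 ≤ 2*(61/50)*(1 + 16 * aFun 9 b) := by
        rw [hA, ha, ← sub_nonneg]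
        have hid : 2*(61/50)*(1 + 16 * (b*(2+7*b)^2/(2*(2+6*b)))) - (1 + ((2+8*b)/40 + (4/9)*(2*b+7*(b*(2+7*b)^2/(2*(2+6*b)))))/2*(397/50))^2
            = ((64230256/625) + (518707312/625)*b + (-8506974416/375)*b^2 + (-730692642704/1875)*b^3 + (-123743146774912/50625)*b^4 + (-382787305620608/50625)*b^5 + (-117316009497344/10125)*b^6 + (-4746890557696/675)*b^7) / ((102400) + (921600)*b + (2764800)*b^2 + (2764800)*b^3) := by
          field_simp
          ring
        rw [hid]
        apply div_nonneg
        · nlinarith [mul_nonneg (pow_nonneg hb0.le 0) (pow_nonneg (by linarith : (0:ℝ) ≤ (1/20) - b) 7) , mul_nonneg (pow_nonneg hb0.le 1) (pow_nonneg (by linarith : (0:ℝ) ≤ (1/20) - b) 6) , mul_nonneg (pow_nonneg hb0.le 2) (pow_nonneg (by linarith : (0:ℝ) ≤ (1/20) - b) 5) , mul_nonneg (pow_nonneg hb0.le 3) (pow_nonneg (by linarith : (0:ℝ) ≤ (1/20) - b) 4) , mul_nonneg (pow_nonneg hb0.le 4) (pow_nonneg (by linarith : (0:ℝ) ≤ (1/20)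 - b) 3) , mul_nonneg (pow_nonneg hb0.le 5) (pow_nonneg (by linarith : (0:ℝ) ≤ (1/20) - b) 2) , mul_nonneg (pow_nonneg hb0.le 6) (pow_nonneg (by linarith : (0:ℝ) ≤ (1/20) - b) 1) , mul_nonneg (pow_nonneg hb0.le 7) (pow_nonneg (by linarith : (0:ℝ) ≤ (1/20) - b) 0)]
        · nlinarith
      nlinarith [h1, h0, h2]
    have hrhoid : rhoFun 9 b = ((378432)*b + (9393408)*b^2 + (94587264)*b^3 + (496005120)*b^4 + (1432759104)*b^5 + (2167264512)*b^6 + (1344252672)*b^7) / ((419904) + (11757312)*b + (130170240)*b^2 + (732312576)*b^3 + (2225911104)*b^4 + (3491921664)*b^5 + (2222131968)*b^6) := by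
      simp only [rhoFun, gammaFun, aFun]
      rw [show (((9:ℕ):ℝ)-2) = 7 by norm_num, show (((9:ℕ):ℝ)-3) = 6 by norm_num,
          show (((9:ℕ):ℝ)-1) = 8 by norm_num, show (((9:ℕ):ℝ)) = 9 by norm_num]
      have hDD : (0:ℝ) < 1 + 2*8*(b*(2+7*b)^2/(2*(2+6*b))) := by
        have := ha0; rw [ha] at this; nlinarith [this]
      have hden : ((419904) + (11757312)*b + (130170240)*b^2 + (732312576)*b^3 + (2225911104)*b^4 + (3491921664)*b^5 + (2222131968)*b^6) ≠ 0 := by nlinarith [pow_pos hb0 2, pow_pos hb0 3, pow_pos hb0 4, pow_pos hb0 5, pow_pos hb0 6]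
      field_simp
      ring
    have hdenpos : (0:ℝ) < ((419904) + (11757312)*b + (130170240)*b^2 + (732312576)*b^3 + (2225911104)*b^4 + (3491921664)*b^5 + (2222131968)*b^6) := by nlinarith [pow_pos hb0 2, pow_pos hb0 3, pow_pos hb0 4, pow_pos hb0 5, pow_pos hb0 6]
    have hrho_pos : 0 < rhoFun 9 b := by
      rw [hrhoid]
      apply div_pos (by nlinarith [pow_pos hb0 2, pow_pos hb0 3, pow_pos hb0 4, pow_pos hb0 5, pow_pos hb0 6, pow_pos hb0 7]) hdenpos
    have hrho_ub : rhoFun 9 b ≤ b*((451/500) - (42/25)*b) := by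
      rw [hrhoid, div_le_iff₀ hdenpos]
      nlinarith [mul_nonneg (pow_nonneg hb0.le 1) (pow_nonneg (by linarith : (0:ℝ) ≤ (1/20) - b) 7) , mul_nonneg (pow_nonneg hb0.le 2) (pow_nonneg (by linarith : (0:ℝ) ≤ (1/20) - b) 6) , mul_nonneg (pow_nonneg hb0.le 3) (pow_nonneg (by linarith : (0:ℝ) ≤ (1/20) - b) 5) , mul_nonneg (pow_nonneg hb0.le 4) (pow_nonneg (by linarith : (0:ℝ) ≤ (1/20) - b) 4) , mul_nonneg (pow_nonneg hb0.le 5) (pow_nonneg (by linarith : (0:ℝ) ≤ (1/20) - b) 3) , mul_nonneg (pow_nonneg hb0.le 6) (pow_nonneg (by linarith : (0:ℝ) ≤ (1/20) - b) 2) , mul_nonneg (pow_nonneg hb0.le 7) (pow_nonneg (by linarith : (0:ℝ) ≤ (1/20) - b) 1) , mul_nonneg (pow_nonneg hb0.le 8) (pow_nonneg (by linarith : (0:ℝ) ≤ (1/20) - b) 0)]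
    have homega : (61/50) ≤ omegaFun 9 b / 4 := by
      rw [omegaFun, le_div_iff₀ (by norm_num : (0:ℝ) < 4)]
      rw [show (8*((9:ℕ):ℝ)^2) = 648 by norm_num,
          show (((9:ℕ):ℝ)-2) = 7 by norm_num, show (((9:ℕ):ℝ)-3) = 6 by norm_num]
      rw [Real.le_sqrt' (by norm_num)]
      rw [le_div_iff₀ (by positivity)]
      have hcube : rhoFun 9 b^3 ≤ (b*((451/500) - (42/25)*b))^3 :=
        pow_le_pow_left₀ hrho_pos.le hrho_ub 3
      have h5 : ((61/50)*4)^2 * (648*rhoFun 9 b^3*(2+6*b)^2)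
          ≤ ((61/50)*4)^2 * (648*(b*((451/500) - (42/25)*b))^3*(2+6*b)^2) := by
        gcongr
      refine le_trans h5 ?_
      nlinarith [mul_nonneg (pow_nonneg hb0.le 1) (pow_nonneg (by linarith : (0:ℝ) ≤ (1/20) - b) 7) , mul_nonneg (pow_nonneg hb0.le 2) (pow_nonneg (by linarith : (0:ℝ) ≤ (1/20) - b) 6) , mul_nonneg (pow_nonneg hb0.le 3) (pow_nonneg (by linarith : (0:ℝ) ≤ (1/20) - b) 5) , mul_nonneg (pow_nonneg hb0.le 4) (pow_nonneg (by linarith : (0:ℝ) ≤ (1/20) - b) 4) , mul_nonneg (pow_nonneg hb0.le 5) (pow_nonneg (by linarith : (0:ℝ) ≤ (1/20) - b) 3) , mul_nonneg (pow_nonneg hb0.le 6) (pow_nonneg (by linarith : (0:ℝ) ≤ (1/20) - b) 2) , mul_nonneg (pow_nonneg hb0.le 7) (pow_nonneg (by linarith : (0:ℝ) ≤ (1/20) - b) 1) , mul_nonneg (pow_nonneg hb0.le 8) (pow_nonneg (by linarith : (0:ℝ) ≤ (1/20) - b) 0)]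
    calc (1 + AFun 9 b / 2 * Real.sqrt (((9:ℕ):ℝ) * (((9:ℕ):ℝ) - 2))) ^ 2 *
          (1 / (Pcoef 9 b + ((9:ℕ):ℝ) * Qcoef 9 b))
        ≤ (61/50) := by
          rw [hPQ, mul_one_div, div_le_iff₀ (by positivity)]
          nlinarith [key1]
      _ ≤ omegaFun 9 b / 4 := homega
  · -- n = 10
    have hbm : b ≤ (1/22) := by
      rw [show (2*((10:ℕ):ℝ)+2) = 22 by norm_num] at hb
      linarith [hb]
    have hE : (0:ℝ) < 2 + 7*b := by linarith
    have ha : aFun 10 b = b*(2+8*b)^2/(2*(2+7*b)) := by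
      simp only [aFun]; norm_num
    have ha0 : 0 ≤ aFun 10 b := by
      rw [ha]
      apply div_nonneg (by positivity) (by nlinarith)
    have hA : AFun 10 b = (2+8*b)/54 + (4/10)*(2*b+8*aFun 10 b) := by
      simp only [AFun]; norm_num
    have hA0 : 0 ≤ AFun 10 b := by
      rw [hA]; nlinarith [ha0]
    have hD : (0:ℝ) < 1 + 18 * aFun 10 b := by nlinarith [ha0]
    have hPQ : Pcoef 10 b + ((10:ℕ):ℝ)*Qcoef 10 b = 2*(1 + 18 * aFun 10 b) := by
      simp only [Pcoef, Qcoef]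
      rw [show (((10:ℕ):ℝ)-1) = 9 by norm_num, show (((10:ℕ):ℝ)-2) = 8 by norm_num,
          show (((10:ℕ):ℝ)) = 10 by norm_num]
      field_simp
      ring
    have hs : Real.sqrt (((10:ℕ):ℝ) * (((10:ℕ):ℝ)-2)) ≤ (1789/200) := by
      rw [show ((10:ℕ):ℝ) * (((10:ℕ):ℝ)-2) = 80 by norm_num]
      rw [Real.sqrt_le_iff]
      norm_num
    have hsnn : 0 ≤ Real.sqrt (((10:ℕ):ℝ) * (((10:ℕ):ℝ)-2)) := Real.sqrt_nonneg _
    have key1 : (1 + AFun 10 b/2*Real.sqrt (((10:ℕ):ℝ) * (((10:ℕ):ℝ)-2)))^2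
        ≤ 2*(119/100)*(1 + 18 * aFun 10 b) := by
      have h1 : 1 + AFun 10 b/2*Real.sqrt (((10:ℕ):ℝ) * (((10:ℕ):ℝ)-2))
          ≤ 1 + AFun 10 b/2*(1789/200) := by nlinarith [hA0, hs, hsnn]
      have h0 : 0 ≤ 1 + AFun 10 b/2*Real.sqrt (((10:ℕ):ℝ) * (((10:ℕ):ℝ)-2)) := by
        nlinarith [mul_nonneg (by linarith : (0:ℝ) ≤ AFun 10 b/2) hsnn]
      have h2 : (1 + AFun 10 b/2*(1789/200))^2 ≤ 2*(119/100)*(1 + 18 * aFun 10 b) := by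
        rw [hA, ha, ← sub_nonneg]
        have hid : 2*(119/100)*(1 + 18 * (b*(2+8*b)^2/(2*(2+7*b)))) - (1 + ((2+8*b)/54 + (4/10)*(2*b+8*(b*(2+8*b)^2/(2*(2+7*b)))))/2*(1789/200))^2
            = ((119120279/625) + (2405510051/1250)*b + (-626015584247/12500)*b^2 + (-25777951797803/25000)*b^3 + (-117970417320736/15625)*b^4 + (-424761230433152/15625)*b^5 + (-151491463888896/3125)*b^6 + (-535175451869184/15625)*b^7) / ((186624) + (1959552)*b + (6858432)*b^2 + (8001504)*b^3) := by
          field_simp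
          ring
        rw [hid]
        apply div_nonneg
        · nlinarith [mul_nonneg (pow_nonneg hb0.le 0) (pow_nonneg (by linarith : (0:ℝ) ≤ (1/22) - b) 7) , mul_nonneg (pow_nonneg hb0.le 1) (pow_nonneg (by linarith : (0:ℝ) ≤ (1/22) - b) 6) , mul_nonneg (pow_nonneg hb0.le 2) (pow_nonneg (by linarith : (0:ℝ) ≤ (1/22) - b) 5) , mul_nonneg (pow_nonneg hb0.le 3) (pow_nonneg (by linarith : (0:ℝ) ≤ (1/22) - b) 4) , mul_nonneg (pow_nonneg hb0.le 4) (pow_nonneg (by linarith : (0:ℝ) ≤ (1/22) - b) 3) , mul_nonneg (pow_nonneg hb0.le 5) (pow_nonneg (by linarith : (0:ℝ) ≤ (1/22) - b) 2) , mul_nonneg (pow_nonneg hb0.le 6) (pow_nonneg (by linarith : (0:ℝ) ≤ (1/22) - b) 1) , mul_nonneg (pow_nonneg hb0.le 7) (pow_nonneg (by linarith : (0:ℝ) ≤ (1/22) - b) 0)]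
        · nlinarith
      nlinarith [h1, h0, h2]
    have hrhoid : rhoFun 10 b = ((582400)*b + (16764800)*b^2 + (195892800)*b^3 + (1192330400)*b^4 + (3998310400)*b^5 + (7022131200)*b^6 + (5057740800)*b^7) / ((640000) + (20480000)*b + (260160000)*b^2 + (1685120000)*b^3 + (5912200000)*b^4 + (10725120000)*b^5 + (7902720000)*b^6) := by
      simp only [rhoFun, gammaFun, aFun]
      rw [show (((10:ℕ):ℝ)-2) = 8 by norm_num, show (((10:ℕ):ℝ)-3) = 7 by norm_num,
          show (((10:ℕ):ℝ)-1) = 9 by norm_num, show (((10:ℕ):ℝ)) = 10 by norm_num]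
      have hDD : (0:ℝ) < 1 + 2*9*(b*(2+8*b)^2/(2*(2+7*b))) := by
        have := ha0; rw [ha] at this; nlinarith [this]
      have hden : ((640000) + (20480000)*b + (260160000)*b^2 + (1685120000)*b^3 + (5912200000)*b^4 + (10725120000)*b^5 + (7902720000)*b^6) ≠ 0 := by nlinarith [pow_pos hb0 2, pow_pos hb0 3, pow_pos hb0 4, pow_pos hb0 5, pow_pos hb0 6]
      field_simp
      ring
    have hdenpos : (0:ℝ) < ((640000) + (20480000)*b + (260160000)*b^2 + (1685120000)*b^3 + (5912200000)*b^4 + (10725120000)*b^5 + (7902720000)*b^6) := by nlinarith [pow_pos hb0 2, pow_pos hb0 3, pow_pos hb0 4, pow_pos hb0 5, pow_pos hb0 6]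
    have hrho_pos : 0 < rhoFun 10 b := by
      rw [hrhoid]
      apply div_pos (by nlinarith [pow_pos hb0 2, pow_pos hb0 3, pow_pos hb0 4, pow_pos hb0 5, pow_pos hb0 6, pow_pos hb0 7]) hdenpos
    have hrho_ub : rhoFun 10 b ≤ b*((1821/2000) - (42/25)*b) := by
      rw [hrhoid, div_le_iff₀ hdenpos]
      nlinarith [mul_nonneg (pow_nonneg hb0.le 1) (pow_nonneg (by linarith : (0:ℝ) ≤ (1/22) - b) 7) , mul_nonneg (pow_nonneg hb0.le 2) (pow_nonneg (by linarith : (0:ℝ) ≤ (1/22) - b) 6) , mul_nonneg (pow_nonneg hb0.le 3) (pow_nonneg (by linarith : (0:ℝ) ≤ (1/22) - b) 5) , mul_nonneg (pow_nonneg hb0.le 4) (pow_nonneg (by linarith : (0:ℝ) ≤ (1/22) - b) 4) , mul_nonneg (pow_nonneg hb0.le 5) (pow_nonneg (by linarith : (0:ℝ) ≤ (1/22) - b) 3) , mul_nonneg (pow_nonneg hb0.le 6) (pow_nonneg (by linarith : (0:ℝ) ≤ (1/22) - b) 2) , mul_nonneg (pow_nonneg hb0.le 7) (pow_nonneg (by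 linarith : (0:ℝ) ≤ (1/22) - b) 1) , mul_nonneg (pow_nonneg hb0.le 8) (pow_nonneg (by linarith : (0:ℝ) ≤ (1/22) - b) 0)]
    have homega : (119/100) ≤ omegaFun 10 b / 4 := by
      rw [omegaFun, le_div_iff₀ (by norm_num : (0:ℝ) < 4)]
      rw [show (8*((10:ℕ):ℝ)^2) = 800 by norm_num,
          show (((10:ℕ):ℝ)-2) = 8 by norm_num, show (((10:ℕ):ℝ)-3) = 7 by norm_num]
      rw [Real.le_sqrt' (by norm_num)]
      rw [le_div_iff₀ (by positivity)]
      have hcube : rhoFun 10 b^3 ≤ (b*((1821/2000) - (42/25)*b))^3 :=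
        pow_le_pow_left₀ hrho_pos.le hrho_ub 3
      have h5 : ((119/100)*4)^2 * (800*rhoFun 10 b^3*(2+7*b)^2)
          ≤ ((119/100)*4)^2 * (800*(b*((1821/2000) - (42/25)*b))^3*(2+7*b)^2) := by
        gcongr
      refine le_trans h5 ?_
      nlinarith [mul_nonneg (pow_nonneg hb0.le 1) (pow_nonneg (by linarith : (0:ℝ) ≤ (1/22) - b) 7) , mul_nonneg (pow_nonneg hb0.le 2) (pow_nonneg (by linarith : (0:ℝ) ≤ (1/22) - b) 6) , mul_nonneg (pow_nonneg hb0.le 3) (pow_nonneg (by linarith : (0:ℝ) ≤ (1/22) - b) 5) , mul_nonneg (pow_nonneg hb0.le 4) (pow_nonneg (by linarith : (0:ℝ) ≤ (1/22) - b) 4) , mul_nonneg (pow_nonneg hb0.le 5) (pow_nonneg (by linarith : (0:ℝ) ≤ (1/22) - b) 3) , mul_nonneg (pow_nonneg hb0.le 6) (pow_nonneg (by linarith : (0:ℝ) ≤ (1/22) - b) 2) , mul_nonneg (pow_nonneg hb0.le 7) (pow_nonneg (by linarith : (0:ℝ) ≤ (1/22) - b) 1) , mul_nonneg (pow_nonneg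 hb0.le 8) (pow_nonneg (by linarith : (0:ℝ) ≤ (1/22) - b) 0)]
    calc (1 + AFun 10 b / 2 * Real.sqrt (((10:ℕ):ℝ) * (((10:ℕ):ℝ) - 2))) ^ 2 *
          (1 / (Pcoef 10 b + ((10:ℕ):ℝ) * Qcoef 10 b))
        ≤ (119/100) := by
          rw [hPQ, mul_one_div, div_le_iff₀ (by positivity)]
          nlinarith [key1]
      _ ≤ omegaFun 10 b / 4 := homega
  · -- n = 11
    have hbm : b ≤ (1/24) := by
      rw [show (2*((11:ℕ):ℝ)+2) = 24 by norm_num] at hb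
      linarith [hb]
    have hE : (0:ℝ) < 2 + 8*b := by linarith
    have ha : aFun 11 b = b*(2+9*b)^2/(2*(2+8*b)) := by
      simp only [aFun]; norm_num
    have ha0 : 0 ≤ aFun 11 b := by
      rw [ha]
      apply div_nonneg (by positivity) (by nlinarith)
    have hA : AFun 11 b = (2+8*b)/70 + (4/11)*(2*b+9*aFun 11 b) := by
      simp only [AFun]; norm_num
    have hA0 : 0 ≤ AFun 11 b := by
      rw [hA]; nlinarith [ha0]
    have hD : (0:ℝ) < 1 + 20 * aFun 11 b := by nlinarith [ha0]
    have hPQ : Pcoef 11 b + ((11:ℕ):ℝ)*Qcoef 11 b = 2*(1 + 20 * aFun 11 b) := by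
      simp only [Pcoef, Qcoef]
      rw [show (((11:ℕ):ℝ)-1) = 10 by norm_num, show (((11:ℕ):ℝ)-2) = 9 by norm_num,
          show (((11:ℕ):ℝ)) = 11 by norm_num]
      field_simp
      ring
    have hs : Real.sqrt (((11:ℕ):ℝ) * (((11:ℕ):ℝ)-2)) ≤ (199/20) := by
      rw [show ((11:ℕ):ℝ) * (((11:ℕ):ℝ)-2) = 99 by norm_num]
      rw [Real.sqrt_le_iff]
      norm_num
    have hsnn : 0 ≤ Real.sqrt (((11:ℕ):ℝ) * (((11:ℕ):ℝ)-2)) := Real.sqrt_nonneg _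
    have key1 : (1 + AFun 11 b/2*Real.sqrt (((11:ℕ):ℝ) * (((11:ℕ):ℝ)-2)))^2
        ≤ 2*(117/100)*(1 + 20 * aFun 11 b) := by
      have h1 : 1 + AFun 11 b/2*Real.sqrt (((11:ℕ):ℝ) * (((11:ℕ):ℝ)-2))
          ≤ 1 + AFun 11 b/2*(199/20) := by nlinarith [hA0, hs, hsnn]
      have h0 : 0 ≤ 1 + AFun 11 b/2*Real.sqrt (((11:ℕ):ℝ) * (((11:ℕ):ℝ)-2)) := by
        nlinarith [mul_nonneg (by linarith : (0:ℝ) ≤ AFun 11 b/2) hsnn]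
      have h2 : (1 + AFun 11 b/2*(199/20))^2 ≤ 2*(117/100)*(1 + 20 * aFun 11 b) := by
        rw [hA, ha, ← sub_nonneg]
        have hid : 2*(117/100)*(1 + 20 * (b*(2+9*b)^2/(2*(2+8*b)))) - (1 + ((2+8*b)/70 + (4/11)*(2*b+9*(b*(2+9*b)^2/(2*(2+8*b)))))/2*(199/20))^2
            = ((8118396/25) + (3910608)*b + (-5531301792/55)*b^2 + (-26606629080/11)*b^3 + (-12250408087296/605)*b^4 + (-22870267011936/275)*b^5 + (-102337713486036/605)*b^6 + (-16499746512144/121)*b^7) / ((313600) + (3763200)*b + (15052800)*b^2 + (20070400)*b^3) := by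
          field_simp
          ring
        rw [hid]
        apply div_nonneg
        · nlinarith [mul_nonneg (pow_nonneg hb0.le 0) (pow_nonneg (by linarith : (0:ℝ) ≤ (1/24) - b) 7) , mul_nonneg (pow_nonneg hb0.le 1) (pow_nonneg (by linarith : (0:ℝ) ≤ (1/24) - b) 6) , mul_nonneg (pow_nonneg hb0.le 2) (pow_nonneg (by linarith : (0:ℝ) ≤ (1/24) - b) 5) , mul_nonneg (pow_nonneg hb0.le 3) (pow_nonneg (by linarith : (0:ℝ) ≤ (1/24) - b) 4) , mul_nonneg (pow_nonneg hb0.le 4) (pow_nonneg (by linarith : (0:ℝ) ≤ (1/24) - b) 3) , mul_nonneg (pow_nonneg hb0.le 5) (pow_nonneg (by linarith : (0:ℝ) ≤ (1/24) - b) 2) , mul_nonneg (pow_nonneg hb0.le 6) (pow_nonneg (by linarith : (0:ℝ) ≤ (1/24) - b) 1) , mul_nonneg (pow_nonneg hb0.le 7) (pow_nonneg (by linarith : (0:ℝ) ≤ (1/24) - b) 0)]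
        · nlinarith
      nlinarith [h1, h0, h2]
    have hrhoid : rhoFun 11 b = ((859584)*b + (28157184)*b^2 + (374546304)*b^3 + (2595641664)*b^4 + (9911049984)*b^5 + (19821542400)*b^6 + (16258682880)*b^7) / ((937024) + (33732864)*b + (483504384)*b^2 + (3542887744)*b^3 + (14089092864)*b^4 + (29010263040)*b^5 + (24287662080)*b^6) := by
      simp only [rhoFun, gammaFun, aFun]
      rw [show (((11:ℕ):ℝ)-2) = 9 by norm_num, show (((11:ℕ):ℝ)-3) = 8 by norm_num,
          show (((11:ℕ):ℝ)-1) = 10 by norm_num, show (((11:ℕ):ℝ)) = 11 by norm_num]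
      have hDD : (0:ℝ) < 1 + 2*10*(b*(2+9*b)^2/(2*(2+8*b))) := by
        have := ha0; rw [ha] at this; nlinarith [this]
      have hden : ((937024) + (33732864)*b + (483504384)*b^2 + (3542887744)*b^3 + (14089092864)*b^4 + (29010263040)*b^5 + (24287662080)*b^6) ≠ 0 := by nlinarith [pow_pos hb0 2, pow_pos hb0 3, pow_pos hb0 4, pow_pos hb0 5, pow_pos hb0 6]
      field_simp
      ring
    have hdenpos : (0:ℝ) < ((937024) + (33732864)*b + (483504384)*b^2 + (3542887744)*b^3 + (14089092864)*b^4 + (29010263040)*b^5 + (24287662080)*b^6) := by nlinarith [pow_pos hb0 2, pow_pos hb0 3, pow_pos hb0 4, pow_pos hb0 5, pow_pos hb0 6]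
    have hrho_pos : 0 < rhoFun 11 b := by
      rw [hrhoid]
      apply div_pos (by nlinarith [pow_pos hb0 2, pow_pos hb0 3, pow_pos hb0 4, pow_pos hb0 5, pow_pos hb0 6, pow_pos hb0 7]) hdenpos
    have hrho_ub : rhoFun 11 b ≤ b*((459/500) - (234/125)*b) := by
      rw [hrhoid, div_le_iff₀ hdenpos]
      nlinarith [mul_nonneg (pow_nonneg hb0.le 1) (pow_nonneg (by linarith : (0:ℝ) ≤ (1/24) - b) 7) , mul_nonneg (pow_nonneg hb0.le 2) (pow_nonneg (by linarith : (0:ℝ) ≤ (1/24) - b) 6) , mul_nonneg (pow_nonneg hb0.le 3) (pow_nonneg (by linarith : (0:ℝ) ≤ (1/24) - b) 5) , mul_nonneg (pow_nonneg hb0.le 4) (pow_nonneg (by linarith : (0:ℝ) ≤ (1/24) - b) 4) , mul_nonneg (pow_nonneg hb0.le 5) (pow_nonneg (by linarith : (0:ℝ) ≤ (1/24) - b) 3) , mul_nonneg (pow_nonneg hb0.le 6) (pow_nonneg (by linarith : (0:ℝ) ≤ (1/24) - b) 2) , mul_nonneg (pow_nonneg hb0.le 7) (pow_nonneg (by linarith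 : (0:ℝ) ≤ (1/24) - b) 1) , mul_nonneg (pow_nonneg hb0.le 8) (pow_nonneg (by linarith : (0:ℝ) ≤ (1/24) - b) 0)]
    have homega : (117/100) ≤ omegaFun 11 b / 4 := by
      rw [omegaFun, le_div_iff₀ (by norm_num : (0:ℝ) < 4)]
      rw [show (8*((11:ℕ):ℝ)^2) = 968 by norm_num,
          show (((11:ℕ):ℝ)-2) = 9 by norm_num, show (((11:ℕ):ℝ)-3) = 8 by norm_num]
      rw [Real.le_sqrt' (by norm_num)]
      rw [le_div_iff₀ (by positivity)]
      have hcube : rhoFun 11 b^3 ≤ (b*((459/500) - (234/125)*b))^3 :=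
        pow_le_pow_left₀ hrho_pos.le hrho_ub 3
      have h5 : ((117/100)*4)^2 * (968*rhoFun 11 b^3*(2+8*b)^2)
          ≤ ((117/100)*4)^2 * (968*(b*((459/500) - (234/125)*b))^3*(2+8*b)^2) := by
        gcongr
      refine le_trans h5 ?_
      nlinarith [mul_nonneg (pow_nonneg hb0.le 1) (pow_nonneg (by linarith : (0:ℝ) ≤ (1/24) - b) 7) , mul_nonneg (pow_nonneg hb0.le 2) (pow_nonneg (by linarith : (0:ℝ) ≤ (1/24) - b) 6) , mul_nonneg (pow_nonneg hb0.le 3) (pow_nonneg (by linarith : (0:ℝ) ≤ (1/24) - b) 5) , mul_nonneg (pow_nonneg hb0.le 4) (pow_nonneg (by linarith : (0:ℝ) ≤ (1/24) - b) 4) , mul_nonneg (pow_nonneg hb0.le 5) (pow_nonneg (by linarith : (0:ℝ) ≤ (1/24) - b) 3) , mul_nonneg (pow_nonneg hb0.le 6) (pow_nonneg (by linarith : (0:ℝ) ≤ (1/24) - b) 2) , mul_nonneg (pow_nonneg hb0.le 7) (pow_nonneg (by linarith : (0:ℝ) ≤ (1/24) - b) 1) , mul_nonneg (pow_nonneg hb0.le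 8) (pow_nonneg (by linarith : (0:ℝ) ≤ (1/24) - b) 0)]
    calc (1 + AFun 11 b / 2 * Real.sqrt (((11:ℕ):ℝ) * (((11:ℕ):ℝ) - 2))) ^ 2 *
          (1 / (Pcoef 11 b + ((11:ℕ):ℝ) * Qcoef 11 b))
        ≤ (117/100) := by
          rw [hPQ, mul_one_div, div_le_iff₀ (by positivity)]
          nlinarith [key1]
      _ ≤ omegaFun 11 b / 4 := homega
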